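/- Let Ω ⊆ ℝ^n be a nonempty bounded open set, s ∈ (0,1), and let v ∈ L^∞(ℝ^n). Then there exists no measurable set E ⊆ ℝ^{n+1} such that E ∖ Ω^∞ = Sg(v) ∖ Ω^∞ (up to null sets) and P_s(E, Ω^∞) < ∞. In particular there is no s-minimal set in Ω^∞ with exterior data Sg(v) ∖ Ω^∞. -/

import Mathlib

/-! If `E` agrees with `Sg(v)` outside `Ω × ℝ` and `|v| ≤ M`, then outside the cylinder `E` contains
almost everything below height `-M` and almost nothing above height `M`. Take `Ω ⊆ B_R`. A point of
`Ω × (-∞, -R)` at height `t`, whether or not it lies in `E`, faces a region of the other phase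
outside the cylinder of measure `≈ H^{n+1}` at distance `≈ H = M - t`, so it contributes
`≳ H^{n+1} ⋅ H^{-(n+1+s)} = H^{-s}` to `P_s`; since `s < 1`, `∫^∞ H^{-s} dH = ∞`. -/

open MeasureTheory Set Filter Topology Metric Bornology
open scoped ENNReal NNReal symmDiff

noncomputable def Ls (n : ℕ) (s : ℝ) (A B : Set (EuclideanSpace ℝ (Fin n))) : ℝ≥0∞ :=
  ∫⁻ x in A, ∫⁻ y in B, ENNReal.ofReal (dist x y ^ (-((n : ℝ) + s)))

/-- Projection of a point of `ℝ^{n+1}` onto its first `n` coordinates. -/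
def projT {n : ℕ} (X : EuclideanSpace ℝ (Fin (n + 1))) : EuclideanSpace ℝ (Fin n) :=
  WithLp.toLp 2 (fun i => X (Fin.castSucc i))

/-- The last ("vertical") coordinate of a point of `ℝ^{n+1}`. -/
def lastCoord {n : ℕ} (X : EuclideanSpace ℝ (Fin (n + 1))) : ℝ := X (Fin.last n)

/-- The generalized cylinder `Ω × I ⊆ ℝ^{n+1}`. -/
def cylinder {n : ℕ} (Ω : Set (EuclideanSpace ℝ (Fin n))) (I : Set ℝ) :
    Set (EuclideanSpace ℝ (Fin (n + 1))) :=
  {X | projT X ∈ Ω ∧ lastCoord X ∈ I}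

noncomputable def Ps (n : ℕ) (s : ℝ) (E Ω : Set (EuclideanSpace ℝ (Fin n))) : ℝ≥0∞ :=
  Ls n s (E ∩ Ω) (Eᶜ ∩ Ω) + Ls n s (E ∩ Ω) (Eᶜ \ Ω) + Ls n s (E \ Ω) (Eᶜ ∩ Ω)

def SMinimal (n : ℕ) (s : ℝ) (E Ω : Set (EuclideanSpace ℝ (Fin n))) : Prop :=
  Ps n s E Ω < ⊤ ∧ ∀ F : Set (EuclideanSpace ℝ (Fin n)), MeasurableSet F →
    volume ((F \ Ω) ∆ (E \ Ω)) = 0 → Ps n s E Ω ≤ Ps n s F Ω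

/-- The subgraph of a function `v : ℝⁿ → ℝ`, as a subset of `ℝ^{n+1}`. -/
def subgraph {n : ℕ} (v : EuclideanSpace ℝ (Fin n) → ℝ) :
    Set (EuclideanSpace ℝ (Fin (n + 1))) :=
  {X | lastCoord X < v (projT X)}

section

variable {n : ℕ}

noncomputable def lastCoordProjTEquiv (n : ℕ) :
    EuclideanSpace ℝ (Fin (n + 1)) ≃ᵐ ℝ × EuclideanSpace ℝ (Fin n) :=
  (MeasurableEquiv.toLp 2 (Fin (n + 1) → ℝ)).symm.trans <|
    (MeasurableEquiv.piFinSuccAbove (fun _ => ℝ) (Fin.last n)).trans <|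
      (MeasurableEquiv.refl ℝ).prodCongr (MeasurableEquiv.toLp 2 (Fin n → ℝ))

lemma lastCoordProjTEquiv_apply (X : EuclideanSpace ℝ (Fin (n + 1))) :
    lastCoordProjTEquiv n X = (lastCoord X, projT X) := by
  refine Prod.ext rfl ?_
  show WithLp.toLp 2 (fun j => X ((Fin.last n).succAbove j)) = projT X
  simp only [Fin.succAbove_last, projT]

lemma measurePreserving_lastCoordProjTEquiv (n : ℕ) :
    MeasurePreserving (lastCoordProjTEquiv n) volume volume :=
  (((MeasurePreserving.id volume).prod
      (EuclideanSpace.volume_preserving_symm_measurableEquiv_toLp (Fin n)).symm).comp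
    (volume_preserving_piFinSuccAbove (fun _ => ℝ) (Fin.last n))).comp
    (EuclideanSpace.volume_preserving_symm_measurableEquiv_toLp (Fin (n + 1)))

lemma cylinder_eq_preimage (A : Set (EuclideanSpace ℝ (Fin n))) (I : Set ℝ) :
    cylinder A I = lastCoordProjTEquiv n ⁻¹' (I ×ˢ A) := by
  ext X
  rw [mem_preimage, lastCoordProjTEquiv_apply, mem_prod]
  exact and_comm

lemma cylinder_mono {A A' : Set (EuclideanSpace ℝ (Fin n))} {I I' : Set ℝ} (hA : A ⊆ A')
    (hI : I ⊆ I') : cylinder A I ⊆ cylinder A' I' :=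
  fun _ hX => ⟨hA hX.1, hI hX.2⟩

lemma measurableSet_cylinder {A : Set (EuclideanSpace ℝ (Fin n))} {I : Set ℝ}
    (hA : MeasurableSet A) (hI : MeasurableSet I) : MeasurableSet (cylinder A I) := by
  rw [cylinder_eq_preimage]
  exact (lastCoordProjTEquiv n).measurable (hI.prod hA)

lemma lintegral_cylinder (A : Set (EuclideanSpace ℝ (Fin n))) (I : Set ℝ) {f : ℝ → ℝ≥0∞}
    (hf : Measurable f) :
    ∫⁻ X in cylinder A I, f (lastCoord X) = (∫⁻ t in I, f t) * volume A := by
  have hf' : ∀ X, f (lastCoord X) = f (lastCoordProjTEquiv n X).1 := fun X => by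
    rw [lastCoordProjTEquiv_apply]
  simp_rw [cylinder_eq_preimage, hf']
  rw [(measurePreserving_lastCoordProjTEquiv n).setLIntegral_comp_preimage_emb
      (MeasurableEquiv.measurableEmbedding _) (fun p => f p.1),
    Measure.volume_eq_prod, ← Measure.prod_restrict,
    lintegral_prod (fun p => f p.1) (hf.comp measurable_fst).aemeasurable]
  simp only [lintegral_const, Measure.restrict_apply_univ, lintegral_mul_const _ hf]

lemma volume_cylinder (A : Set (EuclideanSpace ℝ (Fin n))) (I : Set ℝ) :
    volume (cylinder A I) = volume I * volume A := by
  simpa using lintegral_cylinder A I (f := fun _ => 1) measurable_const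

lemma ae_comp_projT {p : EuclideanSpace ℝ (Fin n) → Prop} (h : ∀ᵐ x, p x) :
    ∀ᵐ X : EuclideanSpace ℝ (Fin (n + 1)), p (projT X) := by
  rw [ae_iff] at h ⊢
  have hcyl : {X : EuclideanSpace ℝ (Fin (n + 1)) | ¬p (projT X)} = cylinder {x | ¬p x} univ := by
    ext X
    exact ⟨fun hX => ⟨hX, trivial⟩, And.left⟩
  rw [hcyl, volume_cylinder, h, mul_zero]

lemma dist_sq_eq_dist_projT_sq_add (X Y : EuclideanSpace ℝ (Fin (n + 1))) :
    dist X Y ^ 2 = dist (projT X) (projT Y) ^ 2 + dist (lastCoord X) (lastCoord Y) ^ 2 := by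
  rw [EuclideanSpace.dist_eq, EuclideanSpace.dist_eq, Real.sq_sqrt (by positivity),
    Real.sq_sqrt (by positivity), Fin.sum_univ_castSucc]
  rfl

lemma dist_lastCoord_le (X Y : EuclideanSpace ℝ (Fin (n + 1))) :
    dist (lastCoord X) (lastCoord Y) ≤ dist X Y := by
  have := dist_sq_eq_dist_projT_sq_add X Y
  nlinarith [dist_nonneg (x := X) (y := Y), dist_nonneg (x := lastCoord X) (y := lastCoord Y)]

lemma dist_le_dist_projT_add (X Y : EuclideanSpace ℝ (Fin (n + 1))) :
    dist X Y ≤ dist (projT X) (projT Y) + dist (lastCoord X) (lastCoord Y) := by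
  have := dist_sq_eq_dist_projT_sq_add X Y
  nlinarith [dist_nonneg (x := X) (y := Y), dist_nonneg (x := lastCoord X) (y := lastCoord Y),
    dist_nonneg (x := projT X) (y := projT Y)]

lemma Ls_comm (n : ℕ) (s : ℝ) (A B : Set (EuclideanSpace ℝ (Fin n))) :
    Ls n s A B = Ls n s B A := by
  unfold Ls
  rw [lintegral_lintegral_swap (by fun_prop)]
  simp_rw [dist_comm]

lemma setLIntegral_le_Ls {s : ℝ} {A' A B : Set (EuclideanSpace ℝ (Fin n))}
    {f : EuclideanSpace ℝ (Fin n) → ℝ≥0∞} (hA' : MeasurableSet A') (hA'A : A' ⊆ A)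
    (hf : ∀ X ∈ A', f X ≤ ∫⁻ Y in B, ENNReal.ofReal (dist X Y ^ (-((n : ℝ) + s)))) :
    ∫⁻ X in A', f X ≤ Ls n s A B :=
  (setLIntegral_mono' hA' hf).trans (lintegral_mono_set hA'A)

lemma le_setLIntegral_kernel (hn : 1 ≤ n) {a R H : ℝ} (ha : 0 ≤ a)
    {X : EuclideanSpace ℝ (Fin (n + 1))} (hX : ‖projT X‖ < R) (hRH : R ≤ H)
    {I : Set ℝ} (hI : MeasurableSet I)
    (hIX : ∀ u ∈ I, H ≤ dist u (lastCoord X) ∧ dist u (lastCoord X) ≤ 2 * H)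
    {W : Set (EuclideanSpace ℝ (Fin (n + 1)))}
    (hW : cylinder (closedBall 0 R)ᶜ I ≤ᵐ[volume] W) :
    ENNReal.ofReal ((5 * H) ^ (-a)) *
        (volume I * volume (ball (0 : EuclideanSpace ℝ (Fin n)) (H / 2)))
      ≤ ∫⁻ Y in W, ENNReal.ofReal (dist X Y ^ (-a)) := by
  have hR : 0 < R := (norm_nonneg _).trans_lt hX
  -- The witness region `Q = B(z, H/2) × I` lies outside `B_R × ℝ`, and `H ≤ |X - Y| ≤ 5 H` on it.
  obtain ⟨z, hz⟩ : ∃ z : EuclideanSpace ℝ (Fin n), ‖z‖ = R + H / 2 := by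
    have : Nonempty (Fin n) := ⟨⟨0, hn⟩⟩
    exact exists_norm_eq _ (by linarith)
  set Q := cylinder (ball z (H / 2)) I
  have hQ : Q ⊆ cylinder (closedBall 0 R)ᶜ I := fun Y ⟨hY, hYI⟩ => by
    refine ⟨fun hYR => ?_, hYI⟩
    have := norm_sub_norm_le z (projT Y)
    rw [← dist_eq_norm, dist_comm] at this
    simp only [mem_ball, mem_closedBall, dist_zero_right] at hY hYR
    linarith
  have hkernel : ∀ Y ∈ Q, (5 * H) ^ (-a) ≤ dist X Y ^ (-a) := fun Y ⟨hY, hYI⟩ => by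
    obtain ⟨hH_le, hle_2H⟩ := hIX _ hYI
    have hY_norm : ‖projT Y‖ ≤ R + H := by
      have := norm_le_norm_add_norm_sub' (projT Y) z
      rw [← dist_eq_norm] at this
      simp only [mem_ball] at hY
      linarith
    have hdist : dist X Y ≤ 5 * H := by
      have := dist_le_norm_add_norm (projT X) (projT Y)
      have := dist_le_dist_projT_add X Y
      rw [dist_comm (lastCoord X)] at this
      linarith
    have := dist_lastCoord_le Y X
    rw [dist_comm Y] at this
    exact Real.rpow_le_rpow_of_nonpos (by linarith) hdist (by linarith)
  calc ENNReal.ofReal ((5 * H) ^ (-a)) *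
        (volume I * volume (ball (0 : EuclideanSpace ℝ (Fin n)) (H / 2)))
      = ∫⁻ _ in Q, ENNReal.ofReal ((5 * H) ^ (-a)) := by
        rw [setLIntegral_const, volume_cylinder, Measure.addHaar_ball_center _ z]
    _ ≤ ∫⁻ Y in Q, ENNReal.ofReal (dist X Y ^ (-a)) :=
        setLIntegral_mono' (measurableSet_cylinder measurableSet_ball hI)
          fun Y hY => ENNReal.ofReal_le_ofReal (hkernel Y hY)
    _ ≤ ∫⁻ Y in W, ENNReal.ofReal (dist X Y ^ (-a)) :=
        lintegral_mono_set' (hQ.eventuallyLE.trans hW)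

lemma le_setLIntegral_kernel_of_volume_eq (hn : 1 ≤ n) {a R H : ℝ} (ha : 0 ≤ a)
    {X : EuclideanSpace ℝ (Fin (n + 1))} (hX : ‖projT X‖ < R) (hRH : R ≤ H)
    {I : Set ℝ} (hI : MeasurableSet I) (hIvol : volume I = ENNReal.ofReal H)
    (hIX : ∀ u ∈ I, H ≤ dist u (lastCoord X) ∧ dist u (lastCoord X) ≤ 2 * H)
    {W : Set (EuclideanSpace ℝ (Fin (n + 1)))}
    (hW : cylinder (closedBall 0 R)ᶜ I ≤ᵐ[volume] W) :
    ENNReal.ofReal (5 ^ (-a) / 2 ^ n) * ENNReal.ofReal (H ^ ((n : ℝ) + 1 - a)) *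
        volume (ball (0 : EuclideanSpace ℝ (Fin n)) 1)
      ≤ ∫⁻ Y in W, ENNReal.ofReal (dist X Y ^ (-a)) := by
  have hH : 0 < H := (norm_nonneg _).trans_lt hX |>.trans_le hRH
  have : Nonempty (Fin n) := ⟨⟨0, hn⟩⟩
  refine le_of_eq_of_le ?_ (le_setLIntegral_kernel hn ha hX hRH hI hIX hW)
  rw [hIvol, Measure.addHaar_ball (r := H / 2) _ _ (by positivity), finrank_euclideanSpace_fin,
    ← mul_assoc, ← mul_assoc, ← ENNReal.ofReal_mul (by positivity),
    ← ENNReal.ofReal_mul (by positivity), ← ENNReal.ofReal_mul (by positivity)]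
  congr 2
  rw [Real.mul_rpow (by norm_num) hH.le, div_pow, Real.rpow_sub hH, Real.rpow_add hH,
    Real.rpow_natCast, Real.rpow_one, Real.rpow_neg hH.le, Real.rpow_neg (by norm_num)]
  field_simp

lemma lintegral_Iio_rpow_sub_eq_top {s M T : ℝ} (hs : s ≤ 1) (hT : T < M) :
    ∫⁻ t in Iio T, ENNReal.ofReal ((M - t) ^ (-s)) = ∞ := by
  have hIoi : ∫⁻ u in Ioi (M - T), ENNReal.ofReal (u ^ (-s)) = ∞ := by
    have hnonneg : 0 ≤ᵐ[volume.restrict (Ioi (M - T))] fun u : ℝ => u ^ (-s) :=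
      ae_restrict_of_forall_mem measurableSet_Ioi fun u hu =>
        Real.rpow_nonneg ((sub_pos.2 hT).trans hu).le _
    by_contra hfin
    rw [← ne_eq, lintegral_ofReal_ne_top_iff_integrable (by fun_prop) hnonneg] at hfin
    have := (integrableOn_Ioi_rpow_iff (sub_pos.2 hT)).1 hfin
    linarith
  have hsub := (Measure.measurePreserving_sub_left volume M).setLIntegral_comp_preimage_emb
    (MeasurableEquiv.subLeft M).measurableEmbedding (fun u => ENNReal.ofReal (u ^ (-s)))
    (Ioi (M - T))
  rwa [preimage_const_sub_Ioi, sub_sub_cancel, hIoi] at hsub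

lemma cylinder_compl_closedBall_subset_compl {Ω : Set (EuclideanSpace ℝ (Fin n))} {R : ℝ}
    (hΩR : Ω ⊆ ball 0 R) (I : Set ℝ) :
    cylinder (closedBall 0 R)ᶜ I ⊆ (cylinder Ω univ)ᶜ :=
  fun _ hY hYΩ => hY.1 (ball_subset_closedBall (hΩR hYΩ.1))

section ExteriorData

variable {Ω : Set (EuclideanSpace ℝ (Fin n))} {R M : ℝ} {v : EuclideanSpace ℝ (Fin n) → ℝ}
  {E : Set (EuclideanSpace ℝ (Fin (n + 1)))} (hΩR : Ω ⊆ ball 0 R) (hv : ∀ᵐ x, |v x| ≤ M)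
  (hE : E \ cylinder Ω univ =ᵐ[volume] subgraph v \ cylinder Ω univ)
include hΩR hv hE

lemma cylinder_compl_closedBall_Ici_ae_le :
    cylinder (closedBall 0 R)ᶜ (Ici M) ≤ᵐ[volume] Eᶜ \ cylinder Ω univ := by
  filter_upwards [hE, ae_comp_projT hv] with Y hEY hvY hY
  have hYΩ := cylinder_compl_closedBall_subset_compl hΩR _ hY
  refine ⟨fun hYE => ?_, hYΩ⟩
  have hYsub : lastCoord Y < v (projT Y) := (hEY.mp ⟨hYE, hYΩ⟩).1
  have hYM : M ≤ lastCoord Y := hY.2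
  linarith [le_abs_self (v (projT Y))]

lemma cylinder_compl_closedBall_Iio_ae_le :
    cylinder (closedBall 0 R)ᶜ (Iio (-M)) ≤ᵐ[volume] E \ cylinder Ω univ := by
  filter_upwards [hE, ae_comp_projT hv] with Y hEY hvY hY
  have hYΩ := cylinder_compl_closedBall_subset_compl hΩR _ hY
  have hYM : lastCoord Y < -M := hY.2
  have hYsub : lastCoord Y < v (projT Y) := by linarith [neg_abs_le (v (projT Y))]
  exact hEY.mpr ⟨hYsub, hYΩ⟩

variable (hn : 1 ≤ n) {a : ℝ} (ha : 0 ≤ a) (hM : 0 ≤ M) {X : EuclideanSpace ℝ (Fin (n + 1))}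
  (hX : ‖projT X‖ < R) (hXR : lastCoord X ≤ -R)
include hn ha hM hX hXR

lemma le_setLIntegral_kernel_compl_diff_cylinder :
    ENNReal.ofReal (5 ^ (-a) / 2 ^ n) * ENNReal.ofReal ((M - lastCoord X) ^ ((n : ℝ) + 1 - a)) *
        volume (ball (0 : EuclideanSpace ℝ (Fin n)) 1)
      ≤ ∫⁻ Y in Eᶜ \ cylinder Ω univ, ENNReal.ofReal (dist X Y ^ (-a)) := by
  have hR : 0 < R := (norm_nonneg _).trans_lt hX
  refine le_setLIntegral_kernel_of_volume_eq hn ha hX (by linarith)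
    (I := Ioo M (2 * M - lastCoord X)) measurableSet_Ioo (by rw [Real.volume_Ioo]; ring_nf)
    (fun u hu => ?_)
    ((cylinder_mono subset_rfl (Ioo_subset_Ioi_self.trans Ioi_subset_Ici_self)).eventuallyLE.trans
      (cylinder_compl_closedBall_Ici_ae_le hΩR hv hE))
  rw [Real.dist_eq, abs_of_pos (by linarith [hu.1])]
  constructor <;> linarith [hu.1, hu.2]

lemma le_setLIntegral_kernel_diff_cylinder :
    ENNReal.ofReal (5 ^ (-a) / 2 ^ n) * ENNReal.ofReal ((M - lastCoord X) ^ ((n : ℝ) + 1 - a)) *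
        volume (ball (0 : EuclideanSpace ℝ (Fin n)) 1)
      ≤ ∫⁻ Y in E \ cylinder Ω univ, ENNReal.ofReal (dist X Y ^ (-a)) := by
  have hR : 0 < R := (norm_nonneg _).trans_lt hX
  set t := lastCoord X
  refine le_setLIntegral_kernel_of_volume_eq hn ha hX (by linarith)
    (I := Ioo (3 * t - 2 * M) (2 * t - M)) measurableSet_Ioo (by rw [Real.volume_Ioo]; ring_nf)
    (fun u hu => ?_)
    ((cylinder_mono subset_rfl (Ioo_subset_Iio_self.trans (Iio_subset_Iio (by linarith))))
      |>.eventuallyLE.trans (cylinder_compl_closedBall_Iio_ae_le hΩR hv hE))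
  rw [Real.dist_eq, abs_of_neg (by linarith [hu.2])]
  constructor <;> linarith [hu.1, hu.2]

end ExteriorData

theorem Ps_cylinder_eq_top (hn : 1 ≤ n) {s : ℝ} (hs : s ∈ Ioo (0 : ℝ) 1)
    {Ω : Set (EuclideanSpace ℝ (Fin n))} (hΩo : IsOpen Ω) (hΩne : Ω.Nonempty) {R : ℝ}
    (hΩR : Ω ⊆ ball 0 R) {v : EuclideanSpace ℝ (Fin n) → ℝ} {M : ℝ} (hv : ∀ᵐ x, |v x| ≤ M)
    {E : Set (EuclideanSpace ℝ (Fin (n + 1)))} (hEm : MeasurableSet E)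
    (hE : E \ cylinder Ω univ =ᵐ[volume] subgraph v \ cylinder Ω univ) :
    Ps (n + 1) s E (cylinder Ω univ) = ∞ := by
  have ha : (0 : ℝ) ≤ ((n + 1 : ℕ) : ℝ) + s := by positivity [hs.1.le]
  have hexp : (n : ℝ) + 1 - (((n + 1 : ℕ) : ℝ) + s) = -s := by push_cast; ring
  have hM : 0 ≤ M := hv.exists.elim fun x hx => (abs_nonneg _).trans hx
  have hR : 0 < R :=
    hΩne.elim fun x hx => (norm_nonneg x).trans_lt (mem_ball_zero_iff.1 (hΩR hx))
  set f : ℝ → ℝ≥0∞ := fun t => ENNReal.ofReal (5 ^ (-(((n + 1 : ℕ) : ℝ) + s)) / 2 ^ n) *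
    ENNReal.ofReal ((M - t) ^ (-s)) * volume (ball (0 : EuclideanSpace ℝ (Fin n)) 1)
  have hf_top : (∫⁻ t in Iio (-R), f t) * volume Ω = ∞ := by
    rw [lintegral_mul_const _ (by fun_prop), lintegral_const_mul _ (by fun_prop),
      lintegral_Iio_rpow_sub_eq_top hs.2.le (by linarith),
      ENNReal.mul_top (ENNReal.ofReal_pos.2 (by positivity)).ne',
      ENNReal.top_mul (measure_ball_pos volume 0 one_pos).ne',
      ENNReal.top_mul (hΩo.measure_pos volume hΩne).ne']
  set C := cylinder Ω (Iio (-R))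
  have hCm : MeasurableSet C := measurableSet_cylinder hΩo.measurableSet measurableSet_Iio
  have hCO : C ⊆ cylinder Ω univ := cylinder_mono subset_rfl (subset_univ _)
  have hXC : ∀ X ∈ C, ‖projT X‖ < R ∧ lastCoord X ≤ -R := fun X hX =>
    ⟨mem_ball_zero_iff.1 (hΩR hX.1), le_of_lt hX.2⟩
  refine eq_top_iff.2 (hf_top ▸ ?_)
  calc (∫⁻ t in Iio (-R), f t) * volume Ω
      = ∫⁻ X in C, f (lastCoord X) := (lintegral_cylinder Ω _ (by fun_prop)).symm
    _ = (∫⁻ X in C ∩ E, f (lastCoord X)) + ∫⁻ X in C \ E, f (lastCoord X) :=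
        (lintegral_inter_add_sdiff _ _ hEm).symm
    _ ≤ Ls (n + 1) s (E ∩ cylinder Ω univ) (Eᶜ \ cylinder Ω univ) +
          Ls (n + 1) s (Eᶜ ∩ cylinder Ω univ) (E \ cylinder Ω univ) := by
        refine add_le_add (setLIntegral_le_Ls (hCm.inter hEm) (fun X hX => ⟨hX.2, hCO hX.1⟩)
          fun X hX => ?_) (setLIntegral_le_Ls (hCm.diff hEm) (fun X hX => ⟨hX.2, hCO hX.1⟩)
          fun X hX => ?_)
        · simpa only [f, hexp] using le_setLIntegral_kernel_compl_diff_cylinder hΩR hv hE hn ha hM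
            (hXC X hX.1).1 (hXC X hX.1).2
        · simpa only [f, hexp] using le_setLIntegral_kernel_diff_cylinder hΩR hv hE hn ha hM
            (hXC X hX.1).1 (hXC X hX.1).2
    _ ≤ Ps (n + 1) s E (cylinder Ω univ) := by
        rw [Ls_comm (n + 1) s (Eᶜ ∩ _)]
        unfold Ps
        gcongr
        exact le_add_self

end

theorem no_finite_perimeter_competitor_in_cylinder_general
    (n : ℕ) (hn : 1 ≤ n) (s : ℝ) (hs : s ∈ Set.Ioo (0 : ℝ) 1)
    (Ω : Set (EuclideanSpace ℝ (Fin n))) (hΩo : IsOpen Ω) (hΩb : IsBounded Ω)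
    (hΩne : Ω.Nonempty)
    (v : EuclideanSpace ℝ (Fin n) → ℝ)
    (hvbd : ∃ M : ℝ, ∀ᵐ x : EuclideanSpace ℝ (Fin n), |v x| ≤ M) :
    (¬ ∃ E : Set (EuclideanSpace ℝ (Fin (n + 1))), MeasurableSet E ∧
        volume ((E \ cylinder Ω Set.univ) ∆ (subgraph v \ cylinder Ω Set.univ)) = 0 ∧
        Ps (n + 1) s E (cylinder Ω Set.univ) < ⊤)
    ∧
    (¬ ∃ E : Set (EuclideanSpace ℝ (Fin (n + 1))), MeasurableSet E ∧
        volume ((E \ cylinder Ω Set.univ) ∆ (subgraph v \ cylinder Ω Set.univ)) = 0 ∧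
        SMinimal (n + 1) s E (cylinder Ω Set.univ)) := by
  obtain ⟨M, hv⟩ := hvbd
  obtain ⟨R, hΩR⟩ := hΩb.subset_ball 0
  have hPs_top : ∀ E, MeasurableSet E →
      volume ((E \ cylinder Ω univ) ∆ (subgraph v \ cylinder Ω univ)) = 0 →
      Ps (n + 1) s E (cylinder Ω univ) = ∞ := fun E hEm hE =>
    Ps_cylinder_eq_top hn hs hΩo hΩne hΩR hv hEm (measure_symmDiff_eq_zero_iff.1 hE)
  exact ⟨fun ⟨E, hEm, hE, hfin⟩ => hfin.ne (hPs_top E hEm hE),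
    fun ⟨E, hEm, hE, hmin⟩ => hmin.1.ne (hPs_top E hEm hE)⟩

/-- last part of Theorem 1.13: if `v ∈ L^∞(ℝⁿ)`, there is no set with finite
`s`-perimeter in the infinite cylinder `Ω × ℝ` coinciding with the subgraph of `v` outside of it;
in particular, there is no `s`-minimal set in `Ω × ℝ` with exterior data `Sg(v)`. -/
theorem no_finite_perimeter_competitor_in_cylinder
    (n : ℕ) (hn : 1 ≤ n) (s : ℝ) (hs : s ∈ Set.Ioo (0 : ℝ) 1)
    (Ω : Set (EuclideanSpace ℝ (Fin n))) (hΩo : IsOpen Ω) (hΩb : IsBounded Ω)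
    (hΩne : Ω.Nonempty)
    (v : EuclideanSpace ℝ (Fin n) → ℝ) (hv : Measurable v)
    (hvbd : ∃ M : ℝ, ∀ᵐ x : EuclideanSpace ℝ (Fin n), |v x| ≤ M) :
    (¬ ∃ E : Set (EuclideanSpace ℝ (Fin (n + 1))), MeasurableSet E ∧
        volume ((E \ cylinder Ω Set.univ) ∆ (subgraph v \ cylinder Ω Set.univ)) = 0 ∧
        Ps (n + 1) s E (cylinder Ω Set.univ) < ⊤)
    ∧
    (¬ ∃ E : Set (EuclideanSpace ℝ (Fin (n + 1))), MeasurableSet E ∧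
        volume ((E \ cylinder Ω Set.univ) ∆ (subgraph v \ cylinder Ω Set.univ)) = 0 ∧
        SMinimal (n + 1) s E (cylinder Ω Set.univ)) :=
  no_finite_perimeter_competitor_in_cylinder_general n hn s hs Ω hΩo hΩb hΩne v hvbd
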